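/- Let R be a commutative principal ideal domain that is not a field, let p be a nonzero prime element of R, and for n ≥ 1 set N(p, n) = R/(pⁿ). Then the p-Prüfer module N(p, ∞) = colim_{n} R/(pⁿ) (with transition maps given by multiplication by p) and the p-adic module N(p, −∞) = lim_n R/(pⁿ) satisfy Ext¹_R(N(p, ∞), N(p, −∞)) ≠ 0. -/

import Mathlib

open CategoryTheory

namespace Stmt18Aux

variable {R : Type} [CommRing R] [IsDomain R] [IsPrincipalIdealRing R]

/-- Abbreviation for `R/(p^{n+1})`. -/
abbrev Q (p : R) (n : ℕ) : Type := R ⧸ (Ideal.span {p ^ (n + 1)} : Ideal R)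

variable (p : R)
  (f : ∀ i j : ℕ, i ≤ j → Q p i →ₗ[R] Q p j)

abbrev DL := Module.DirectLimit (fun n : ℕ => Q p n) f

theorem dsys
    (hf : ∀ (i j : ℕ) (h : i ≤ j) (x : R),
      f i j h (Submodule.Quotient.mk x) = Submodule.Quotient.mk (p ^ (j - i) * x)) :
    DirectedSystem (fun n : ℕ => Q p n) (fun i j h => f i j h) := by
  constructor
  · intro i x
    obtain ⟨y, rfl⟩ := Submodule.Quotient.mk_surjective _ x
    rw [hf i i le_rfl y, Nat.sub_self, pow_zero, one_mul]
  · intro k j i hij hjk x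
    obtain ⟨y, rfl⟩ := Submodule.Quotient.mk_surjective _ x
    rw [hf, hf, hf, ← mul_assoc, ← pow_add, Nat.sub_add_sub_cancel hjk hij]

noncomputable def e (n : ℕ) : DL p f :=
  Module.DirectLimit.of R ℕ (fun n : ℕ => Q p n) f n (Submodule.Quotient.mk 1)

noncomputable def pi0 : (ℕ →₀ R) →ₗ[R] DL p f :=
  Finsupp.linearCombination R (e p f)

noncomputable def Dm : (ℕ →₀ R) →ₗ[R] (ℕ →₀ R) :=
  Finsupp.lcomapDomain Nat.succ Nat.succ_injective - p • LinearMap.id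

theorem Dm_apply (b : ℕ →₀ R) (m : ℕ) : Dm p b m = b (m + 1) - p * b m := by
  simp [Dm, Finsupp.lcomapDomain, smul_eq_mul]

theorem T_single_zero (r : R) :
    Finsupp.lcomapDomain (R := R) (M := R) Nat.succ Nat.succ_injective (Finsupp.single 0 r)
      = 0 := by
  ext k
  simp [Finsupp.lcomapDomain, Finsupp.single_apply]

theorem T_single_succ (m : ℕ) (r : R) :
    Finsupp.lcomapDomain (R := R) (M := R) Nat.succ Nat.succ_injective
      (Finsupp.single (m + 1) r) = Finsupp.single m r := by
  ext k
  simp [Finsupp.lcomapDomain, Finsupp.single_apply]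

theorem pi0_single (p : R) (f : ∀ i j : ℕ, i ≤ j → Q p i →ₗ[R] Q p j) (n : ℕ) (r : R) :
    pi0 p f (Finsupp.single n r) = r • e p f n := by
  rw [pi0, Finsupp.linearCombination_single]

variable {p f} in
theorem e_eq
    (hf : ∀ (i j : ℕ) (h : i ≤ j) (x : R),
      f i j h (Submodule.Quotient.mk x) = Submodule.Quotient.mk (p ^ (j - i) * x))
    {n N : ℕ} (h : n ≤ N) :
    e p f n = Module.DirectLimit.of R ℕ (fun n : ℕ => Q p n) f N
      (Submodule.Quotient.mk (p ^ (N - n))) := by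
  have h1 : (Submodule.Quotient.mk (p ^ (N - n)) : Q p N)
      = f n N h (Submodule.Quotient.mk 1) := by rw [hf, mul_one]
  rw [h1, Module.DirectLimit.of_f, e]

theorem pe0 (hp : Prime p) : p • e p f 0 = 0 := by
  rw [e, ← map_smul]
  have h1 : (p • (Submodule.Quotient.mk 1 : Q p 0)) = 0 := by
    rw [← Submodule.Quotient.mk_smul, Submodule.Quotient.mk_eq_zero]
    simp [Ideal.mem_span_singleton, smul_eq_mul]
  rw [h1, map_zero]

variable {p f} in
theorem e_succ
    (hf : ∀ (i j : ℕ) (h : i ≤ j) (x : R),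
      f i j h (Submodule.Quotient.mk x) = Submodule.Quotient.mk (p ^ (j - i) * x))
    (n : ℕ) : p • e p f (n + 1) = e p f n := by
  rw [e_eq hf (Nat.le_succ n), e, ← map_smul]
  congr 1
  rw [← Submodule.Quotient.mk_smul]
  congr 1
  rw [show n + 1 - n = 1 from by omega, pow_one, smul_eq_mul, mul_one]

theorem pi0_surj : Function.Surjective (pi0 p f) := by
  intro z
  obtain ⟨n, x, rfl⟩ := Module.DirectLimit.exists_of z
  obtain ⟨r, rfl⟩ := Submodule.Quotient.mk_surjective _ x
  refine ⟨Finsupp.single n r, ?_⟩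
  rw [pi0, Finsupp.linearCombination_single, e, ← map_smul]
  congr 1
  rw [← Submodule.Quotient.mk_smul]
  congr 1
  simp [smul_eq_mul]

variable {p} in
theorem Dm_inj (hp : Prime p) : Function.Injective (Dm p (R := R)) := by
  refine (injective_iff_map_eq_zero _).2 fun b hb => ?_
  have hstep : ∀ m, b (m + 1) = p * b m := by
    intro m
    have h0 : Dm p b m = 0 := by rw [hb]; rfl
    rw [Dm_apply, sub_eq_zero] at h0
    exact h0
  have hpow : ∀ m, b m = p ^ m * b 0 := by
    intro m
    induction m with
    | zero => simp
    | succ k ih => rw [hstep k, ih]; ring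
  obtain ⟨m, hm⟩ := Infinite.exists_notMem_finset b.support
  have hbm : b m = 0 := Finsupp.notMem_support_iff.1 hm
  have hb0 : b 0 = 0 := by
    rcases mul_eq_zero.1 (hpow m ▸ hbm) with h | h
    · exact absurd h (pow_ne_zero _ hp.ne_zero)
    · exact h
  ext k
  rw [hpow k, hb0, mul_zero]; rfl

variable {p f} in
theorem pi0_comp_Dm (hp : Prime p)
    (hf : ∀ (i j : ℕ) (h : i ≤ j) (x : R),
      f i j h (Submodule.Quotient.mk x) = Submodule.Quotient.mk (p ^ (j - i) * x)) :
    (pi0 p f).comp (Dm p) = 0 := by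
  apply Finsupp.lhom_ext
  intro n r
  cases n with
  | zero =>
    rw [LinearMap.comp_apply, Dm, LinearMap.sub_apply, LinearMap.smul_apply, LinearMap.id_apply,
      T_single_zero, zero_sub, map_neg, map_smul, pi0_single,
      smul_comm, pe0 p f hp, smul_zero, neg_zero, LinearMap.zero_apply]
  | succ m =>
    rw [LinearMap.comp_apply, Dm, LinearMap.sub_apply, LinearMap.smul_apply, LinearMap.id_apply,
      T_single_succ, map_sub, map_smul, pi0_single,
      pi0_single, smul_comm, e_succ hf, sub_self, LinearMap.zero_apply]

variable {p f} in
theorem pi0_exact (hp : Prime p)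
    (hf : ∀ (i j : ℕ) (h : i ≤ j) (x : R),
      f i j h (Submodule.Quotient.mk x) = Submodule.Quotient.mk (p ^ (j - i) * x))
    (a : ℕ →₀ R) (ha : pi0 p f a = 0) : ∃ b : ℕ →₀ R, Dm p b = a := by
  haveI := dsys p f hf
  set N := a.support.sup id with hN
  have hsupp : ∀ n ∈ a.support, n ≤ N := fun n hn => Finset.le_sup (f := id) hn
  set L : R →ₗ[R] DL p f :=
    (Module.DirectLimit.of R ℕ (fun n : ℕ => Q p n) f N).comp
      (Submodule.mkQ (Ideal.span {p ^ (N + 1)})) with hL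
  have hLr : ∀ r : R, L r = Module.DirectLimit.of R ℕ (fun n : ℕ => Q p n) f N
      (Submodule.Quotient.mk r) := fun r => rfl
  have h1 : pi0 p f a = L (∑ n ∈ a.support, a n * p ^ (N - n)) := by
    rw [map_sum, pi0, Finsupp.linearCombination_apply, Finsupp.sum]
    refine Finset.sum_congr rfl fun n hn => ?_
    rw [e_eq hf (hsupp n hn), ← smul_eq_mul, map_smul, hLr]
  rw [h1, hLr] at ha
  obtain ⟨M, hNM, hMz⟩ := Module.DirectLimit.of.zero_exact ha
  rw [hf] at hMz
  rw [Submodule.Quotient.mk_eq_zero, Ideal.mem_span_singleton] at hMz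
  obtain ⟨c, hc⟩ := hMz
  -- the recursively defined preimage
  set b : ℕ → R := fun n => Nat.rec (-c) (fun k bk => a k + p * bk) n with hb
  have hb0 : b 0 = -c := rfl
  have hbs : ∀ n, b (n + 1) = a n + p * b n := fun n => rfl
  have hsum : p ^ (M - N) * (∑ n ∈ a.support, a n * p ^ (N - n))
      = ∑ k ∈ Finset.Ico 0 (M + 1), a k * p ^ (M - k) := by
    rw [Finset.mul_sum]
    have hsub : a.support ⊆ Finset.Ico 0 (M + 1) := fun n hn =>
      Finset.mem_Ico.2 ⟨Nat.zero_le n, by have := (hsupp n hn).trans hNM; omega⟩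
    rw [← Finset.sum_subset hsub
      (fun n _ hn => by rw [Finsupp.notMem_support_iff.1 hn, zero_mul])]
    refine Finset.sum_congr rfl fun n hn => ?_
    have hpow : p ^ (M - N) * p ^ (N - n) = p ^ (M - n) := by
      rw [← pow_add]
      congr 1
      have := hsupp n hn
      omega
    calc p ^ (M - N) * (a n * p ^ (N - n)) = a n * (p ^ (M - N) * p ^ (N - n)) := by ring
      _ = a n * p ^ (M - n) := by rw [hpow]
  have claim : ∀ n, n ≤ M + 1 →
      p ^ (M + 1 - n) * b n = -(∑ k ∈ Finset.Ico n (M + 1), a k * p ^ (M - k)) := by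
    intro n
    induction n with
    | zero =>
      intro _
      rw [hb0, Nat.sub_zero, mul_neg, ← hc, hsum]
    | succ m ih =>
      intro hm
      have hmM : m ≤ M := Nat.lt_succ_iff.1 hm
      have hlt : m < M + 1 := Nat.lt_succ_of_le hmM
      have ih' := ih (Nat.le_of_lt hm)
      rw [Finset.sum_eq_sum_Ico_succ_bot hlt] at ih'
      have h2 : p ^ (M - m) * (p * b m) = p ^ (M + 1 - m) * b m := by
        rw [show M + 1 - m = (M - m) + 1 from by omega, pow_succ]
        ring
      rw [hbs, Nat.succ_sub_succ, mul_add, h2, ih']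
      ring
  have hbM1 : b (M + 1) = 0 := by
    have := claim (M + 1) le_rfl
    rwa [Nat.sub_self, pow_zero, one_mul, Finset.Ico_self, Finset.sum_empty, neg_zero] at this
  have hbig : ∀ j, b (M + 1 + j) = 0 := by
    intro j
    induction j with
    | zero => exact hbM1
    | succ k ih =>
      have hak : a (M + 1 + k) = 0 := by
        apply Finsupp.notMem_support_iff.1
        intro hmem
        have := hsupp _ hmem
        omega
      have : M + 1 + (k + 1) = (M + 1 + k) + 1 := by omega
      rw [this, hbs, ih, hak, mul_zero, add_zero]
  refine ⟨Finsupp.onFinset (Finset.range (M + 2)) b ?_, ?_⟩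
  · intro n hn
    by_contra hcon
    apply hn
    have h3 : M + 2 ≤ n := by
      by_contra h4
      exact hcon (Finset.mem_range.2 (by omega))
    have h5 : n = M + 1 + (n - (M + 1)) := by omega
    rw [h5]; exact hbig _
  · ext m
    rw [Dm_apply]
    simp only [Finsupp.onFinset_apply]
    rw [hbs]
    ring

end Stmt18Aux

namespace Stmt18Aux

theorem projective_of_isZero {C : Type*} [Category C] [Limits.HasZeroMorphisms C]
    {X : C} (h : Limits.IsZero X) : Projective X :=
  ⟨fun {E X'} f e _ => ⟨0, by rw [Limits.zero_comp]; exact h.eq_of_src 0 f⟩⟩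

variable {R : Type} [CommRing R] [IsDomain R] [IsPrincipalIdealRing R]
variable (p : R) (f : ∀ i j : ℕ, i ≤ j → Q p i →ₗ[R] Q p j)

noncomputable def Fobj : ModuleCat.{0} R := ModuleCat.of R (ℕ →₀ R)

noncomputable def Zobj : ModuleCat.{0} R := ModuleCat.of R PUnit

noncomputable def Pobj : ModuleCat.{0} R := ModuleCat.of R (DL p f)

noncomputable def Xc : ℕ → ModuleCat.{0} R
  | 0 => Fobj (R := R)
  | 1 => Fobj (R := R)
  | _ + 2 => Zobj (R := R)

noncomputable def dc : ∀ n : ℕ, Xc (R := R) (n + 1) ⟶ Xc n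
  | 0 => ModuleCat.ofHom (Dm p)
  | _ + 1 => 0

noncomputable def Cplx : ChainComplex (ModuleCat.{0} R) ℕ :=
  ChainComplex.of (Xc (R := R)) (dc p)
    (fun n => by rw [show dc p (n + 1) = 0 from rfl, Limits.zero_comp])

theorem Cplx_d10 : (Cplx p).d 1 0 = ModuleCat.ofHom (Dm p) :=
  ChainComplex.of_d (Xc (R := R)) (dc p) 0

theorem Cplx_dsucc (n : ℕ) : (Cplx p).d (n + 2) (n + 1) = 0 :=
  ChainComplex.of_d _ _ (n + 1)

theorem isZero_Zobj : Limits.IsZero (Zobj (R := R)) :=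
  @ModuleCat.isZero_of_subsingleton R _ (Zobj (R := R))
    (inferInstanceAs (Subsingleton PUnit))

variable {p f} in
theorem hw (hp : Prime p)
    (hf : ∀ (i j : ℕ) (h : i ≤ j) (x : R),
      f i j h (Submodule.Quotient.mk x) = Submodule.Quotient.mk (p ^ (j - i) * x)) :
    (Cplx p).d 1 0 ≫ ModuleCat.ofHom (pi0 p f) = 0 := by
  rw [Cplx_d10]
  apply ModuleCat.hom_ext; apply LinearMap.ext
  intro x
  exact LinearMap.congr_fun (pi0_comp_Dm hp hf) x

variable {p f} in
noncomputable def resπ (hp : Prime p)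
    (hf : ∀ (i j : ℕ) (h : i ≤ j) (x : R),
      f i j h (Submodule.Quotient.mk x) = Submodule.Quotient.mk (p ^ (j - i) * x)) :
    Cplx p ⟶ (ChainComplex.single₀ (ModuleCat.{0} R)).obj (Pobj p f) :=
  (ChainComplex.toSingle₀Equiv _ _).symm ⟨ModuleCat.ofHom (pi0 p f), hw hp hf⟩

variable {p f} in
noncomputable def res (hp : Prime p)
    (hf : ∀ (i j : ℕ) (h : i ≤ j) (x : R),
      f i j h (Submodule.Quotient.mk x) = Submodule.Quotient.mk (p ^ (j - i) * x)) :
    ProjectiveResolution (Pobj p f) where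
  complex := Cplx p
  projective := by
    rintro (_ | _ | n)
    · exact ModuleCat.projective_of_free (M := Fobj (R := R))
        (Finsupp.basisSingleOne (R := R) (ι := ℕ))
    · exact ModuleCat.projective_of_free (M := Fobj (R := R))
        (Finsupp.basisSingleOne (R := R) (ι := ℕ))
    · exact projective_of_isZero (isZero_Zobj (R := R))
  π := resπ hp hf
  quasiIso := ⟨fun n => by
    cases n with
    | zero =>
      rw [ChainComplex.quasiIsoAt₀_iff, ShortComplex.quasiIso_iff_of_zeros']
      · have hex : (ShortComplex.mk ((Cplx p).d 1 0) (ModuleCat.ofHom (pi0 p f))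
            (hw hp hf)).Exact := by
          rw [ShortComplex.moduleCat_exact_iff]
          intro x hx
          obtain ⟨b, hb⟩ := pi0_exact hp hf x hx
          refine ⟨b, ?_⟩
          show ((Cplx p).d 1 0) b = x
          rw [Cplx_d10]
          exact hb
        have hepi : Epi (ModuleCat.ofHom (pi0 p f)) :=
          (ModuleCat.epi_iff_surjective _).2 (pi0_surj p f)
        refine (ShortComplex.exact_and_epi_g_iff_of_iso ?_).2 ⟨hex, hepi⟩
        refine ShortComplex.isoMk (Iso.refl _) (Iso.refl _) (Iso.refl _) ?_ ?_
        · exact (Category.id_comp _).trans (Category.comp_id _).symm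
        · rfl
      all_goals rfl
    | succ n =>
      rw [quasiIsoAt_iff_exactAt']
      · rw [HomologicalComplex.exactAt_iff' _ (n + 2) (n + 1) n (by simp) (by simp)]
        cases n with
        | zero =>
          refine (ShortComplex.exact_iff_mono _ (Cplx_dsucc p 0)).2 ?_
          show Mono ((Cplx p).d 1 0)
          rw [Cplx_d10]
          exact (ModuleCat.mono_iff_injective _).2 (Dm_inj hp)
        | succ m =>
          exact ShortComplex.exact_of_isZero_X₂ _ (isZero_Zobj (R := R))
      · apply ChainComplex.exactAt_succ_single_obj⟩

end Stmt18Aux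

open Stmt18Aux
/-- Let `R` be a PID which is not a field and `p` a prime element.  Let
`N(p, ∞) = colim_n R/(pⁿ)` be the Prüfer module (transition maps given by multiplication
by `p`) and `N(p, -∞) = lim_n R/(pⁿ)` the `p`-adic module (transition maps the canonical
quotient maps).  Then `Ext¹_R(N(p, ∞), N(p, -∞)) ≠ 0`. -/
theorem stmt18 {R : Type} [CommRing R] [IsDomain R] [IsPrincipalIdealRing R]
    (hR : ¬IsField R) (p : R) (hp : Prime p)
    (f : ∀ i j : ℕ, i ≤ j →
      (R ⧸ (Ideal.span {p ^ (i + 1)} : Ideal R)) →ₗ[R]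
        (R ⧸ (Ideal.span {p ^ (j + 1)} : Ideal R)))
    (hf : ∀ (i j : ℕ) (h : i ≤ j) (x : R),
      f i j h (Submodule.Quotient.mk x) = Submodule.Quotient.mk (p ^ (j - i) * x))
    (g : ∀ n : ℕ, (R ⧸ (Ideal.span {p ^ (n + 2)} : Ideal R)) →ₗ[R]
        (R ⧸ (Ideal.span {p ^ (n + 1)} : Ideal R)))
    (hg : ∀ (n : ℕ) (x : R),
      g n (Submodule.Quotient.mk x) = Submodule.Quotient.mk x) :
    ¬Subsingleton
      (((Ext ℤ (ModuleCat.{0} R) 1).obj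
          (Opposite.op (ModuleCat.of R
            (Module.DirectLimit (fun n : ℕ => R ⧸ (Ideal.span {p ^ (n + 1)} : Ideal R)) f)))).obj
        (ModuleCat.of R
          ↥(⨅ n : ℕ, LinearMap.ker
            ((g n).comp
                (LinearMap.proj (n + 1) :
                  (∀ m : ℕ, R ⧸ (Ideal.span {p ^ (m + 1)} : Ideal R)) →ₗ[R]
                    (R ⧸ (Ideal.span {p ^ (n + 2)} : Ideal R))) -
              LinearMap.proj n)))) := by
  intro hsub
  classical
  let Aobj : ModuleCat.{0} R := ModuleCat.of R
    ↥(⨅ n : ℕ, LinearMap.ker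
      ((g n).comp
          (LinearMap.proj (n + 1) :
            (∀ m : ℕ, R ⧸ (Ideal.span {p ^ (m + 1)} : Ideal R)) →ₗ[R]
              (R ⧸ (Ideal.span {p ^ (n + 2)} : Ideal R))) -
        LinearMap.proj n))
  haveI hsub' : Subsingleton
      ↑(((Ext ℤ (ModuleCat.{0} R) 1).obj (Opposite.op (Pobj p f))).obj Aobj) := hsub
  let PR := res (f := f) hp hf
  have hiso := PR.isoExt (R := ℤ) 1 Aobj
  have hzExt : Limits.IsZero
      (((Ext ℤ (ModuleCat.{0} R) 1).obj (Opposite.op (Pobj p f))).obj Aobj) :=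
    ModuleCat.isZero_of_subsingleton _
  set K : CochainComplex (ModuleCat.{0} ℤ) ℕ := (Cplx p).linearYonedaObj ℤ Aobj with hK
  have hzK : Limits.IsZero (K.homology 1) := hzExt.of_iso hiso.symm
  have hexK : K.ExactAt 1 := (HomologicalComplex.exactAt_iff_isZero_homology K 1).2 hzK
  rw [K.exactAt_iff' 0 1 2 (by simp) (by simp)] at hexK
  have hz2 : Limits.IsZero ((Cplx p).X 2) := isZero_Zobj (R := R)
  haveI hsub2 : Subsingleton ((Cplx p).X 2 ⟶ Aobj) := ⟨fun u v => hz2.eq_of_src u v⟩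
  have hgK : (K.sc' 0 1 2).g = 0 := by
    haveI : Subsingleton ↑(K.X 2) := hsub2
    exact (ModuleCat.isZero_of_subsingleton (K.X 2)).eq_of_tgt _ _
  have hepiK : Epi (K.sc' 0 1 2).f := hexK.epi_f hgK
  -- the cocycle
  have hmem : (fun m => (Submodule.Quotient.mk 1 : Q p m)) ∈
      (⨅ n : ℕ, LinearMap.ker
        ((g n).comp
            (LinearMap.proj (n + 1) :
              (∀ m : ℕ, R ⧸ (Ideal.span {p ^ (m + 1)} : Ideal R)) →ₗ[R]
                (R ⧸ (Ideal.span {p ^ (n + 2)} : Ideal R))) -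
          LinearMap.proj n)) := by
    rw [Submodule.mem_iInf]
    intro n
    rw [LinearMap.mem_ker, LinearMap.sub_apply, LinearMap.comp_apply]
    simp only [LinearMap.proj_apply]
    rw [hg n 1]
    exact sub_self _
  let oneA : ↑Aobj := ⟨_, hmem⟩
  let φ : (Cplx p).X 1 ⟶ Aobj := ModuleCat.ofHom ((Finsupp.lapply 0).smulRight oneA)
  obtain ⟨ψ', hψ⟩ := (ModuleCat.epi_iff_surjective _).1 hepiK φ
  have hfK : (K.sc' 0 1 2).f = ModuleCat.ofHom (Linear.leftComp ℤ Aobj ((Cplx p).d 1 0)) :=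
    ChainComplex.linearYonedaObj_d (Cplx p) ℤ Aobj 0 1
  rw [hfK] at hψ
  let ψ : (Cplx p).X 0 ⟶ Aobj := ψ'
  have hcomp : ModuleCat.ofHom (Dm p) ≫ ψ = φ := by
    rw [← Cplx_d10]
    exact hψ
  have heval := ConcreteCategory.congr_hom hcomp (Finsupp.single 0 1)
  have hDs : Dm p (Finsupp.single 0 1) = -(p • Finsupp.single 0 1) := by
    rw [Dm, LinearMap.sub_apply, LinearMap.smul_apply, LinearMap.id_apply, T_single_zero,
      zero_sub]
  have hL : (ModuleCat.ofHom (Dm p) ≫ ψ) (Finsupp.single 0 1)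
      = ψ (Dm p (Finsupp.single 0 1)) := rfl
  have hφs : φ (Finsupp.single 0 1) = oneA := by
    show ((Finsupp.lapply (0 : ℕ)).smulRight oneA) (Finsupp.single 0 1) = oneA
    rw [LinearMap.smulRight_apply, Finsupp.lapply_apply, Finsupp.single_eq_same, one_smul]
  rw [hL, hDs] at heval
  replace heval : -(p • ψ (Finsupp.single 0 1)) = φ (Finsupp.single 0 1) :=
    (congrArg Neg.neg (ψ.hom.map_smul _ _)).symm.trans ((ψ.hom.map_neg _).symm.trans heval)
  replace heval := heval.trans hφs
  -- heval : -(p • ψ (single 0 1)) = oneA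
  set y : ↑Aobj := ψ (Finsupp.single 0 1) with hy
  have h0 : -(p • (y.1 0)) = (Submodule.Quotient.mk 1 : Q p 0) :=
    congrArg (fun v : ↑Aobj => v.1 0) heval
  obtain ⟨r, hr⟩ := Submodule.Quotient.mk_surjective _ (y.1 0)
  rw [← hr] at h0
  have h1 : -(p • (Submodule.Quotient.mk r : Q p 0)) = Submodule.Quotient.mk 1 := h0
  have h2 : (Submodule.Quotient.mk (1 + p * r) : Q p 0) = 0 := by
    have h2a : (Submodule.Quotient.mk (1 + p * r) : Q p 0)
        = Submodule.Quotient.mk 1 + p • Submodule.Quotient.mk r := by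
      rw [← Submodule.Quotient.mk_smul, ← Submodule.Quotient.mk_add, smul_eq_mul]
    rw [h2a, ← h1]
    exact neg_add_cancel _
  rw [Submodule.Quotient.mk_eq_zero] at h2
  have h3 : p ∣ 1 + p * r := by
    have := Ideal.mem_span_singleton.1 h2
    simpa using this
  have h4 : p ∣ 1 := by
    have h5 : (1 : R) = (1 + p * r) - p * r := by ring
    rw [h5]
    exact dvd_sub h3 (dvd_mul_right p r)
  exact hp.not_unit (isUnit_of_dvd_one h4)
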